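/- arXiv:2106.01344 — 6 statements merged into one kernel-verified Lean document; each statement's English description precedes it below -/
import Mathlib

section
/- Let Q be an n×n Q-matrix and let ρ, ρ̃ be two solutions of the ODE ρ' = Qᵀ ρ. Then the weighted ℓ¹-distance Σ_i |ρ_i(t) − ρ̃_i(t)| is nonincreasing in t. -/
/-!
The difference `w = ρ - ρ'` again solves `w' = Qᵀ w`. The right derivative of `|w i|` is
`εᵢ w'ᵢ` for a subgradient `εᵢ` of `|·|` at `w i`, and for a Q-matrix
`ε ⬝ᵥ Qᵀ w = ∑ⱼ w j ∑ᵢ Q j i εᵢ ≤ ∑ⱼ |w j| ∑ᵢ Q j i = 0`, the diagonal term being exact and the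
off-diagonal ones bounded using `Q j i ≥ 0`. A continuous function with nonpositive right
derivatives is nonincreasing.
-/

open Filter Set Topology Asymptotics Matrix

lemma SignType.abs_coe_le_one (s : SignType) : |(s : ℝ)| ≤ 1 := by
  cases s <;> simp

lemma HasDerivAt.hasDerivWithinAt_Ici_abs_of_eq_zero {f : ℝ → ℝ} {f' x : ℝ}
    (hf : HasDerivAt f f' x) (hx : f x = 0) :
    HasDerivWithinAt (fun z => |f z|) |f'| (Ici x) x := by
  rw [hasDerivWithinAt_iff_isLittleO]
  have hf := hasDerivWithinAt_iff_isLittleO.1 (hf.hasDerivWithinAt (s := Ici x))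
  refine IsBigO.trans_isLittleO (IsBigO.of_bound 1 ?_) hf
  filter_upwards [self_mem_nhdsWithin] with z (hz : x ≤ z)
  have hscale : (z - x) * |f'| = |(z - x) * f'| := by
    rw [abs_mul, abs_of_nonneg (sub_nonneg.2 hz)]
  simp only [hx, abs_zero, sub_zero, smul_eq_mul, Real.norm_eq_abs, one_mul, hscale]
  exact abs_abs_sub_abs_le_abs_sub _ _

lemma HasDerivAt.exists_hasDerivWithinAt_Ici_abs {f : ℝ → ℝ} {f' x : ℝ}
    (hf : HasDerivAt f f' x) :
    ∃ ε : ℝ, |ε| ≤ 1 ∧ ε * f x = |f x| ∧ HasDerivWithinAt (fun z => |f z|) (ε * f') (Ici x) x := by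
  by_cases hx : f x = 0
  · refine ⟨SignType.sign f', SignType.abs_coe_le_one _, by simp [hx], ?_⟩
    rw [sign_mul_self]
    exact hf.hasDerivWithinAt_Ici_abs_of_eq_zero hx
  · exact ⟨SignType.sign (f x), SignType.abs_coe_le_one _, sign_mul_self _,
      ((hasDerivAt_abs hx).comp x hf).hasDerivWithinAt⟩

lemma le_of_forall_hasDerivWithinAt_Ici_nonpos {f : ℝ → ℝ} {a b : ℝ} (hab : a ≤ b)
    (hf : ContinuousOn f (Icc a b))
    (hf' : ∀ x ∈ Ico a b, ∃ d ≤ 0, HasDerivWithinAt f d (Ici x) x) : f b ≤ f a := by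
  choose! d hd_nonpos hd using hf'
  exact image_le_of_deriv_right_le_deriv_boundary (B := fun _ => f a) hf hd le_rfl
    continuousOn_const (fun x _ => hasDerivWithinAt_const x _ _) hd_nonpos ⟨hab, le_rfl⟩

section QMatrix

variable {ι : Type*} [Fintype ι] {Q : Matrix ι ι ℝ}

lemma dotProduct_transpose_mulVec_nonpos (hQoff : ∀ i j, i ≠ j → 0 ≤ Q i j)
    (hQrow : ∀ i, ∑ j, Q i j = 0) {w ε : ι → ℝ} (hε : ∀ i, |ε i| ≤ 1)
    (hεw : ∀ i, ε i * w i = |w i|) : ε ⬝ᵥ (Qᵀ *ᵥ w) ≤ 0 := by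
  have hterm : ∀ j i, Q j i * (ε i * w j) ≤ Q j i * |w j| := by
    intro j i
    rcases eq_or_ne i j with rfl | hij
    · rw [hεw]
    · refine mul_le_mul_of_nonneg_left ?_ (hQoff j i hij.symm)
      calc ε i * w j ≤ |ε i| * |w j| := abs_mul (ε i) (w j) ▸ le_abs_self _
        _ ≤ |w j| := mul_le_of_le_one_left (abs_nonneg _) (hε i)
  calc ε ⬝ᵥ (Qᵀ *ᵥ w) = ∑ j, ∑ i, Q j i * (ε i * w j) := by
        simp only [dotProduct, mulVec, transpose_apply, Finset.mul_sum]
        rw [Finset.sum_comm]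
        exact Finset.sum_congr rfl fun _ _ => Finset.sum_congr rfl fun _ _ => by ring
    _ ≤ ∑ j, ∑ i, Q j i * |w j| :=
        Finset.sum_le_sum fun j _ => Finset.sum_le_sum fun i _ => hterm j i
    _ = 0 := by simp [← Finset.sum_mul, hQrow]

lemma sum_abs_le_of_hasDerivAt_transpose_mulVec (hQoff : ∀ i j, i ≠ j → 0 ≤ Q i j)
    (hQrow : ∀ i, ∑ j, Q i j = 0) {w : ℝ → ι → ℝ} {a b : ℝ} (hab : a ≤ b)
    (hw : ∀ t ∈ Icc a b, ∀ i, HasDerivAt (fun s => w s i) ((Qᵀ *ᵥ w t) i) t) :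
    ∑ i, |w b i| ≤ ∑ i, |w a i| := by
  refine le_of_forall_hasDerivWithinAt_Ici_nonpos (f := fun t => ∑ i, |w t i|) hab ?_ fun t ht => ?_
  · exact continuousOn_finsetSum _ fun i _ t ht =>
      (hw t ht i).continuousAt.continuousWithinAt.abs
  · choose ε hε hεw hderiv using fun i =>
      (hw t (Ico_subset_Icc_self ht) i).exists_hasDerivWithinAt_Ici_abs
    exact ⟨ε ⬝ᵥ (Qᵀ *ᵥ w t), dotProduct_transpose_mulVec_nonpos hQoff hQrow hε hεw,
      HasDerivWithinAt.fun_sum fun i _ => hderiv i⟩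

end QMatrix

/-- ℓ¹-contraction for two solutions of the forward equation `ρ' = Qᵀ ρ` of a Q-matrix. -/
theorem qmatrix_l1_contraction {n : ℕ} (Q : Matrix (Fin n) (Fin n) ℝ)
    (hQoff : ∀ i j, i ≠ j → 0 ≤ Q i j)
    (hQrow : ∀ i, ∑ j, Q i j = 0)
    (ρ ρ' : ℝ → Fin n → ℝ)
    (hODE : ∀ t ≥ (0:ℝ), ∀ i, HasDerivAt (fun s => ρ s i) (∑ j, Q j i * ρ t j) t)
    (hODE' : ∀ t ≥ (0:ℝ), ∀ i, HasDerivAt (fun s => ρ' s i) (∑ j, Q j i * ρ' t j) t) :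
    ∀ s t : ℝ, 0 ≤ s → s ≤ t →
      ∑ i, |ρ t i - ρ' t i| ≤ ∑ i, |ρ s i - ρ' s i| := by
  intro s t hs hst
  refine sum_abs_le_of_hasDerivAt_transpose_mulVec hQoff hQrow (w := ρ - ρ') hst
    fun z hz i => ?_
  have hz₀ : z ≥ 0 := hs.trans hz.1
  rw [Pi.sub_apply, mulVec_sub]
  exact (hODE z hz₀ i).sub (hODE' z hz₀ i)
end

section
/- Let Q be an n×n Q-matrix and let f solve the adjoint ODE f' = Q f. Then the maximum max_i f_i(t) is nonincreasing in time and the minimum min_i f_i(t) is nondecreasing in time. -/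
/-!
If coordinate `j` attains the maximum of `f x`, then
`f_j' = ∑ₗ Q_jl (f_l - f_j) ≤ 0`, because the off-diagonal rates are nonnegative and the rows
of `Q` sum to zero. Hence the upper right Dini derivative of `max_i f_i` is nonpositive, and a
continuous function with this property cannot increase. The minimum is the maximum of `-f`,
which solves the same linear equation.
-/

open Filter Topology

def IsQMatrix {ι : Type*} [Fintype ι] (Q : Matrix ι ι ℝ) : Prop :=
  (∀ i j, i ≠ j → 0 ≤ Q i j) ∧ ∀ i, ∑ j, Q i j = 0

theorem IsQMatrix.sum_mul_nonpos_of_le {ι : Type*} [Fintype ι] {Q : Matrix ι ι ℝ}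
    (hQ : IsQMatrix Q) {v : ι → ℝ} {i : ι} (hv : ∀ j, v j ≤ v i) : ∑ j, Q i j * v j ≤ 0 := by
  have hshift : ∑ j, Q i j * v j = ∑ j, Q i j * (v j - v i) := by
    simp only [mul_sub, Finset.sum_sub_distrib, ← Finset.sum_mul, hQ.2 i, zero_mul, sub_zero]
  rw [hshift]
  refine Finset.sum_nonpos fun j _ => ?_
  rcases eq_or_ne i j with rfl | hij
  · simp
  · exact mul_nonpos_of_nonneg_of_nonpos (hQ.1 i j hij) (sub_nonpos.2 (hv j))

theorem slope_lt_iff_of_lt {f : ℝ → ℝ} {x z r : ℝ} (hxz : x < z) :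
    slope f x z < r ↔ f z < f x + r * (z - x) := by
  rw [slope_def_field, div_lt_iff₀ (sub_pos.2 hxz)]
  constructor <;> intro h <;> linarith

namespace Finset

variable {ι : Type*} {s : Finset ι} (hs : s.Nonempty) {g : ι → ℝ → ℝ} {g' : ι → ℝ → ℝ}

theorem eventually_slope_sup'_lt {x r : ℝ}
    (hderiv : ∀ i ∈ s, HasDerivWithinAt (g i) (g' i x) (Set.Ioi x) x)
    (hmax : ∀ i ∈ s, g i x = s.sup' hs (g · x) → g' i x < r) :
    ∀ᶠ z in 𝓝[>] x, slope (fun y => s.sup' hs (g · y)) x z < r := by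
  set M := s.sup' hs (g · x)
  have hline : Tendsto (fun z => M + r * (z - x)) (𝓝[>] x) (𝓝 M) := by
    have : Continuous (fun z => M + r * (z - x)) := by fun_prop
    simpa using (this.tendsto x).mono_left nhdsWithin_le_nhds
  have hbelow : ∀ i ∈ s, ∀ᶠ z in 𝓝[>] x, g i z < M + r * (z - x) := by
    intro i hi
    rcases (le_sup' (g · x) hi).lt_or_eq with hlt | heq
    · exact (hderiv i hi).continuousWithinAt.tendsto.eventually_lt hline hlt
    · filter_upwards [(hderiv i hi).limsup_slope_le' (lt_irrefl x) (hmax i hi heq),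
        self_mem_nhdsWithin] with z hslope hz
      rwa [slope_lt_iff_of_lt hz, heq] at hslope
  filter_upwards [(s.eventually_all).2 hbelow, self_mem_nhdsWithin] with z hz hxz
  exact (slope_lt_iff_of_lt hxz).2 ((sup'_lt_iff hs).2 hz)

theorem sup'_apply_le_of_deriv_nonpos_at_max {a b : ℝ} (hab : a ≤ b)
    (hcont : ∀ i ∈ s, ContinuousOn (g i) (Set.Icc a b))
    (hderiv : ∀ i ∈ s, ∀ x ∈ Set.Ico a b, HasDerivWithinAt (g i) (g' i x) (Set.Ioi x) x)
    (hmax : ∀ i ∈ s, ∀ x ∈ Set.Ico a b, g i x = s.sup' hs (g · x) → g' i x ≤ 0) :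
    s.sup' hs (g · b) ≤ s.sup' hs (g · a) :=
  image_le_of_liminf_slope_right_le_deriv_boundary (ContinuousOn.finset_sup'_apply hs hcont)
    le_rfl continuousOn_const (fun x _ => hasDerivWithinAt_const x _ _)
    (fun x hx _ hr => (eventually_slope_sup'_lt hs (fun i hi => hderiv i hi x hx)
      fun i hi hi_max => (hmax i hi x hx hi_max).trans_lt hr).frequently) ⟨hab, le_rfl⟩

theorem sup'_neg_eq_neg_inf' {α : Type*} [AddCommGroup α] [LinearOrder α]
    [IsOrderedAddMonoid α] (f : ι → α) : s.sup' hs (fun i => -f i) = -s.inf' hs f := by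
  apply le_antisymm
  · exact sup'_le _ _ fun i hi => neg_le_neg (inf'_le _ hi)
  · obtain ⟨i, hi, hmin⟩ := exists_mem_eq_inf' hs f
    exact hmin ▸ le_sup' (fun i => -f i) hi

end Finset

namespace IsQMatrix

variable {ι : Type*} [Fintype ι] {Q : Matrix ι ι ℝ} {f : ℝ → ι → ℝ} {s t : ℝ}
  (hne : (Finset.univ : Finset ι).Nonempty)

theorem sup'_le_of_hasDerivAt (hQ : IsQMatrix Q) (hst : s ≤ t)
    (hf : ∀ x ∈ Set.Icc s t, ∀ i, HasDerivAt (fun y => f y i) (∑ j, Q i j * f x j) x) :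
    Finset.univ.sup' hne (f t ·) ≤ Finset.univ.sup' hne (f s ·) :=
  Finset.sup'_apply_le_of_deriv_nonpos_at_max hne hst
    (fun i _ x hx => (hf x hx i).continuousAt.continuousWithinAt)
    (fun i _ x hx => (hf x (Set.Ico_subset_Icc_self hx) i).hasDerivWithinAt)
    fun _ _ _ _ hmax =>
      hQ.sum_mul_nonpos_of_le fun j => hmax ▸ Finset.le_sup' _ (Finset.mem_univ j)

theorem inf'_le_of_hasDerivAt (hQ : IsQMatrix Q) (hst : s ≤ t)
    (hf : ∀ x ∈ Set.Icc s t, ∀ i, HasDerivAt (fun y => f y i) (∑ j, Q i j * f x j) x) :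
    Finset.univ.inf' hne (f s ·) ≤ Finset.univ.inf' hne (f t ·) := by
  have hneg : ∀ x ∈ Set.Icc s t, ∀ i,
      HasDerivAt (fun y => -f y i) (∑ j, Q i j * -f x j) x := fun x hx i => by
    simpa only [mul_neg, Finset.sum_neg_distrib] using (hf x hx i).fun_neg
  have := sup'_le_of_hasDerivAt (f := fun y i => -f y i) hne hQ hst hneg
  rw [Finset.sup'_neg_eq_neg_inf', Finset.sup'_neg_eq_neg_inf'] at this
  exact neg_le_neg_iff.1 this

end IsQMatrix

/-- Discrete maximum principle for the adjoint equation `f' = Q f` of a Q-matrix: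
the maximum of `f` is nonincreasing and the minimum is nondecreasing in time. -/
theorem qmatrix_maximum_principle {n : ℕ} (hn : 0 < n) (Q : Matrix (Fin n) (Fin n) ℝ)
    (hQoff : ∀ i j, i ≠ j → 0 ≤ Q i j)
    (hQrow : ∀ i, ∑ j, Q i j = 0)
    (f : ℝ → Fin n → ℝ)
    (hODE : ∀ t ≥ (0:ℝ), ∀ i, HasDerivAt (fun s => f s i) (∑ j, Q i j * f t j) t) :
    ∀ s t : ℝ, 0 ≤ s → s ≤ t →
      (Finset.univ.sup' ⟨⟨0, hn⟩, Finset.mem_univ _⟩ (fun i => f t i)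
          ≤ Finset.univ.sup' ⟨⟨0, hn⟩, Finset.mem_univ _⟩ (fun i => f s i)) ∧
      (Finset.univ.inf' ⟨⟨0, hn⟩, Finset.mem_univ _⟩ (fun i => f s i)
          ≤ Finset.univ.inf' ⟨⟨0, hn⟩, Finset.mem_univ _⟩ (fun i => f t i)) := by
  intro s t hs hst
  have hQ : IsQMatrix Q := ⟨hQoff, hQrow⟩
  have hf : ∀ x ∈ Set.Icc s t, ∀ i, HasDerivAt (fun y => f y i) (∑ j, Q i j * f x j) x :=
    fun x hx => hODE x (hs.trans hx.1)
  exact ⟨hQ.sup'_le_of_hasDerivAt _ hst hf, hQ.inf'_le_of_hasDerivAt _ hst hf⟩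
end

section
/- Let Q be an n×n Q-matrix, a > 0 and Δt > 0. Then K̃ := I + (Δt/(1 + aΔt)) Q has nonnegative entries whenever a ≥ max_i(−Q_{ii}), each row of K̃ sums to 1, and for any left-invariant probability vector π (πᵀQ = 0) one has πᵀ K̃ = πᵀ. In particular the mixed explicit-implicit scheme ρ^{k+1} = K̃ᵀ ρ^k is positivity- and mass-preserving for every time step Δt > 0. -/
/-- The unconditionally stable explicit propagator `K̃ = I + (Δt/(1+aΔt)) Q`:
nonnegative entries (when `a ≥ max_i(−Q_{ii})`), rows sum to 1, left-invariant
vectors of `Q` are invariant for `K̃`, and the scheme `ρ^{k+1} = K̃ᵀρ^k` preserves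
positivity and total mass for every `Δt > 0`. -/
theorem qmatrix_mixed_scheme_stochastic {n : ℕ} (Q : Matrix (Fin n) (Fin n) ℝ)
    (hQoff : ∀ i j, i ≠ j → 0 ≤ Q i j)
    (hQrow : ∀ i, ∑ j, Q i j = 0)
    (a Δt : ℝ) (ha : 0 < a) (hamax : ∀ i, -Q i i ≤ a) (hΔt : 0 < Δt)
    (π : Fin n → ℝ) (hπ : ∀ j, ∑ i, π i * Q i j = 0) :
    (∀ i j, 0 ≤ (1 + (Δt / (1 + a * Δt)) • Q) i j) ∧
    (∀ i, ∑ j, (1 + (Δt / (1 + a * Δt)) • Q) i j = 1) ∧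
    (∀ j, ∑ i, π i * (1 + (Δt / (1 + a * Δt)) • Q) i j = π j) ∧
    (∀ ρ : Fin n → ℝ, (∀ i, 0 ≤ ρ i) →
      (∀ j, 0 ≤ ∑ i, ρ i * (1 + (Δt / (1 + a * Δt)) • Q) i j) ∧
      (∑ j, ∑ i, ρ i * (1 + (Δt / (1 + a * Δt)) • Q) i j = ∑ i, ρ i)) := by
  have hden : 0 < 1 + a * Δt := by positivity
  set c : ℝ := Δt / (1 + a * Δt) with hc
  have hc0 : 0 ≤ c := by positivity
  have hentry : ∀ i j, (1 + c • Q) i j = (if i = j then 1 else 0) + c * Q i j := by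
    intro i j
    simp [Matrix.add_apply, Matrix.one_apply, Matrix.smul_apply, smul_eq_mul]
  have hpos : ∀ i j, 0 ≤ (1 + c • Q) i j := by
    intro i j
    rw [hentry]
    by_cases h : i = j
    · subst h
      have hone : (if i = i then (1:ℝ) else 0) = 1 := if_pos rfl
      rw [hone]
      have hca : c * a ≤ 1 := by
        rw [hc, div_mul_eq_mul_div, div_le_one hden]
        nlinarith
      have := hamax i
      nlinarith
    · simp only [if_neg h]
      have := hQoff i j h
      positivity
  have hrow : ∀ i, ∑ j, (1 + c • Q) i j = 1 := by
    intro i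
    simp only [hentry]
    rw [Finset.sum_add_distrib, ← Finset.mul_sum, hQrow i]
    simp
  have hinv : ∀ j, ∑ i, π i * (1 + c • Q) i j = π j := by
    intro j
    simp only [hentry]
    have : ∀ i, π i * ((if i = j then 1 else 0) + c * Q i j)
        = (if i = j then π i else 0) + c * (π i * Q i j) := by
      intro i; by_cases h : i = j <;> simp [h] <;> ring
    simp only [this]
    rw [Finset.sum_add_distrib, ← Finset.mul_sum, hπ j, Finset.sum_ite_eq' Finset.univ j π]
    simp
  refine ⟨hpos, hrow, hinv, ?_⟩
  intro ρ hρ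
  constructor
  · intro j
    exact Finset.sum_nonneg fun i _ => mul_nonneg (hρ i) (hpos i j)
  · rw [Finset.sum_comm]
    have key : ∀ i, ∑ j, ρ i * (1 + c • Q) i j = ρ i := by
      intro i; rw [← Finset.mul_sum, hrow i, mul_one]
    simp only [key]
end

section
/- Let Q be an n×n Q-matrix, a ≥ max_i(−Q_{ii}), a > 0 and Δt > 0, and set K̃ = I + (Δt/(1+aΔt))Q. For any two sequences defined by ρ^{k+1} = K̃ᵀ ρ^k and ρ̃^{k+1} = K̃ᵀ ρ̃^k, the ℓ¹ distance contracts: Σ_i |ρ_i^{k+1} − ρ̃_i^{k+1}| ≤ Σ_i |ρ_i^k − ρ̃_i^k| for all k, independently of the size of Δt. -/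
/-- Unconditional ℓ¹-contraction of the mixed explicit-implicit scheme
`ρ^{k+1} = K̃ᵀ ρ^k` with `K̃ = I + (Δt/(1+aΔt)) Q`, for every time step `Δt > 0`. -/
theorem qmatrix_mixed_scheme_l1_contraction {n : ℕ} (Q : Matrix (Fin n) (Fin n) ℝ)
    (hQoff : ∀ i j, i ≠ j → 0 ≤ Q i j)
    (hQrow : ∀ i, ∑ j, Q i j = 0)
    (a Δt : ℝ) (ha : 0 < a) (hamax : ∀ i, -Q i i ≤ a) (hΔt : 0 < Δt)
    (ρ ρ' : ℕ → Fin n → ℝ)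
    (hiter : ∀ k j, ρ (k+1) j = ∑ i, ρ k i * (1 + (Δt / (1 + a * Δt)) • Q) i j)
    (hiter' : ∀ k j, ρ' (k+1) j = ∑ i, ρ' k i * (1 + (Δt / (1 + a * Δt)) • Q) i j) :
    ∀ k, ∑ i, |ρ (k+1) i - ρ' (k+1) i| ≤ ∑ i, |ρ k i - ρ' k i| := by
  intro k
  set c : ℝ := Δt / (1 + a * Δt) with hc
  have hden : (0:ℝ) < 1 + a * Δt := by positivity
  have hc0 : 0 ≤ c := le_of_lt (div_pos hΔt hden)
  have hca : c * a ≤ 1 := by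
    rw [div_mul_eq_mul_div, div_le_one hden]
    nlinarith
  set K : Matrix (Fin n) (Fin n) ℝ := 1 + c • Q with hK
  have hKentry : ∀ i j, K i j = (if i = j then (1:ℝ) else 0) + c * Q i j := by
    intro i j
    simp [hK, Matrix.add_apply, Matrix.smul_apply, Matrix.one_apply, smul_eq_mul]
  have hKnn : ∀ i j, 0 ≤ K i j := by
    intro i j
    rw [hKentry]
    by_cases h : i = j
    · subst h
      rw [if_pos rfl]
      have h1 := hamax i
      have h2 : c * (-Q i i) ≤ c * a := mul_le_mul_of_nonneg_left h1 hc0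
      nlinarith
    · simp only [if_neg h, zero_add]
      exact mul_nonneg hc0 (hQoff i j h)
  have hKrow : ∀ i, ∑ j, K i j = 1 := by
    intro i
    simp only [hKentry]
    rw [Finset.sum_add_distrib, ← Finset.mul_sum, hQrow, mul_zero, add_zero]
    simp
  calc ∑ j, |ρ (k+1) j - ρ' (k+1) j|
      = ∑ j, |∑ i, (ρ k i - ρ' k i) * K i j| := by
        apply Finset.sum_congr rfl
        intro j _
        rw [hiter, hiter']
        congr 1
        rw [← Finset.sum_sub_distrib]
        apply Finset.sum_congr rfl
        intro i _
        ring
    _ ≤ ∑ j, ∑ i, |ρ k i - ρ' k i| * K i j := by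
        apply Finset.sum_le_sum
        intro j _
        refine (Finset.abs_sum_le_sum_abs _ _).trans ?_
        apply Finset.sum_le_sum
        intro i _
        rw [abs_mul, abs_of_nonneg (hKnn i j)]
    _ = ∑ i, |ρ k i - ρ' k i| := by
        rw [Finset.sum_comm]
        apply Finset.sum_congr rfl
        intro i _
        rw [← Finset.mul_sum, hKrow, mul_one]
end

section
/- Let Q be an n×n Q-matrix with positive invariant probability vector π, and let ρ(t) solve the forward equation dρ_i/dt = Σ_j (Q_{ji}ρ_j − Q_{ij}ρ_i) with Σ_i ρ_i(0) = Σ_i π_i. Then d/dt Σ_i (ρ_i − π_i)²/π_i = −(1/2) Σ_{i,j} α_{ij} (ρ_j/π_j − ρ_i/π_i)² ≤ 0, with α_{ij} = Q_{ji}π_j + Q_{ij}π_i. -/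
/-!
Write `u = ρ / π`. Since the rows of `Q` sum to zero, the outflow term of the forward equation
drops out and the χ²-divergence has derivative `2 Σᵢ (uᵢ - 1) Σⱼ Qⱼᵢ πⱼ uⱼ`. Expanding
`Σᵢⱼ Qⱼᵢ πⱼ (uⱼ - uᵢ)²`, the `uⱼ²` terms vanish because the rows of `Q` sum to zero and the `uᵢ²`
terms vanish because `π` is invariant, so it equals minus the derivative. Symmetrising the weight
`Qⱼᵢ πⱼ` gives `α`, which is nonnegative off the diagonal; on the diagonal the squares vanish.
-/

open Finset

section

variable {ι : Type*} [Fintype ι]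

theorem sum_flux_eq_of_sum_row_eq_zero {Q : Matrix ι ι ℝ} (hQrow : ∀ i, ∑ j, Q i j = 0)
    (x : ι → ℝ) (i : ι) :
    ∑ j, (Q j i * x j - Q i j * x i) = ∑ j, Q j i * x j := by
  rw [sum_sub_distrib, ← sum_mul, hQrow, zero_mul, sub_zero]

theorem sum_sub_one_mul_sum_eq_neg_half_sum_sum {Q : Matrix ι ι ℝ}
    (hQrow : ∀ i, ∑ j, Q i j = 0) {π : ι → ℝ} (hπinv : ∀ i, ∑ j, Q j i * π j = 0)
    (u : ι → ℝ) :
    ∑ i, (u i - 1) * ∑ j, Q j i * (π j * u j) =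
      -(1/2) * ∑ i, ∑ j, Q j i * π j * (u j - u i) ^ 2 := by
  have hrow : ∀ f : ι → ℝ, ∑ i, ∑ j, Q j i * f j = 0 := fun f => by
    rw [sum_comm]; simp only [← sum_mul, hQrow, zero_mul, sum_const_zero]
  have hcol : ∀ g : ι → ℝ, ∑ i, ∑ j, Q j i * π j * g i = 0 := fun g => by
    simp only [← sum_mul, hπinv, zero_mul, sum_const_zero]
  have h : ∑ i, (u i - 1) * ∑ j, Q j i * (π j * u j) -
        -(1/2) * ∑ i, ∑ j, Q j i * π j * (u j - u i) ^ 2 =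
      1/2 * ∑ i, ∑ j, Q j i * (π j * u j ^ 2) + 1/2 * ∑ i, ∑ j, Q j i * π j * u i ^ 2 -
        ∑ i, ∑ j, Q j i * (π j * u j) := by
    simp only [mul_sum, ← sum_sub_distrib, ← sum_add_distrib]
    exact sum_congr rfl fun i _ => sum_congr rfl fun j _ => by ring
  rw [hrow, hcol, hrow] at h
  linarith

theorem sum_sum_add_swap_mul_sq_sub (w : ι → ι → ℝ) (u : ι → ℝ) :
    ∑ i, ∑ j, (w i j + w j i) * (u j - u i) ^ 2 = 2 * ∑ i, ∑ j, w i j * (u j - u i) ^ 2 := by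
  have hswap : ∑ i, ∑ j, w j i * (u j - u i) ^ 2 = ∑ i, ∑ j, w i j * (u j - u i) ^ 2 := by
    rw [sum_comm]
    exact sum_congr rfl fun i _ => sum_congr rfl fun j _ => by ring
  simp only [add_mul, sum_add_distrib, hswap]
  ring

theorem sum_sum_mul_sq_sub_nonneg {w : ι → ι → ℝ} (hw : ∀ i j, i ≠ j → 0 ≤ w i j)
    (u : ι → ℝ) : 0 ≤ ∑ i, ∑ j, w i j * (u j - u i) ^ 2 := by
  refine sum_nonneg fun i _ => sum_nonneg fun j _ => ?_
  rcases eq_or_ne i j with rfl | hij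
  · simp
  · exact mul_nonneg (hw i j hij) (sq_nonneg _)

theorem hasDerivAt_sum_sq_sub_div {ρ : ℝ → ι → ℝ} {ρ' : ι → ℝ} {t : ℝ}
    (hρ : ∀ i, HasDerivAt (fun s => ρ s i) (ρ' i) t) (π : ι → ℝ) :
    HasDerivAt (fun s => ∑ i, (ρ s i - π i) ^ 2 / π i)
      (∑ i, 2 * (ρ t i - π i) * ρ' i / π i) t := by
  refine HasDerivAt.fun_sum fun i _ => ?_
  simpa using (((hρ i).sub_const (π i)).pow 2).div_const (π i)

end

theorem qmatrix_relative_chi2_dissipation_general {n : ℕ} (Q : Matrix (Fin n) (Fin n) ℝ)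
    (hQoff : ∀ i j, i ≠ j → 0 ≤ Q i j)
    (hQrow : ∀ i, ∑ j, Q i j = 0)
    (π : Fin n → ℝ) (hπpos : ∀ i, 0 < π i)
    (hπinv : ∀ i, ∑ j, Q j i * π j = 0)
    (ρ : ℝ → Fin n → ℝ)
    (hODE : ∀ t, ∀ i, HasDerivAt (fun s => ρ s i)
      (∑ j, (Q j i * ρ t j - Q i j * ρ t i)) t) :
    ∀ t, HasDerivAt (fun s => ∑ i, (ρ s i - π i)^2 / π i)
        (-(1/2) * ∑ i, ∑ j, (Q j i * π j + Q i j * π i) * (ρ t j / π j - ρ t i / π i)^2) t ∧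
      -(1/2) * ∑ i, ∑ j, (Q j i * π j + Q i j * π i) * (ρ t j / π j - ρ t i / π i)^2 ≤ 0 := by
  intro t
  set u : Fin n → ℝ := fun i => ρ t i / π i
  have hρu : ∀ i, π i * u i = ρ t i := fun i => mul_div_cancel₀ _ (hπpos i).ne'
  have hα := sum_sum_add_swap_mul_sq_sub (fun i j => Q j i * π j) u
  have hderiv : ∑ i, 2 * (ρ t i - π i) * (∑ j, (Q j i * ρ t j - Q i j * ρ t i)) / π i =
      -(1/2) * ∑ i, ∑ j, (Q j i * π j + Q i j * π i) * (u j - u i) ^ 2 := by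
    calc _ = 2 * ∑ i, (u i - 1) * ∑ j, Q j i * (π j * u j) := by
          rw [mul_sum]
          refine sum_congr rfl fun i _ => ?_
          simp only [sum_flux_eq_of_sum_row_eq_zero hQrow, hρu, u]
          field_simp [(hπpos i).ne']
      _ = _ := by
          rw [sum_sub_one_mul_sum_eq_neg_half_sum_sum hQrow hπinv, hα]
          ring
  have hα_nonneg := sum_sum_mul_sq_sub_nonneg (w := fun i j => Q j i * π j + Q i j * π i)
    (fun i j hij => by
      have := mul_nonneg (hQoff j i hij.symm) (hπpos j).le
      have := mul_nonneg (hQoff i j hij) (hπpos i).le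
      linarith) u
  exact ⟨hderiv ▸ hasDerivAt_sum_sq_sub_div (hODE t) π, by linarith⟩

/-- Dissipation of the relative χ²-divergence `Σ_i (ρ_i − π_i)²/π_i` along the forward
equation of a Q-matrix with positive invariant probability vector π, for initial data
with the same total mass as π. -/
theorem qmatrix_relative_chi2_dissipation {n : ℕ} (Q : Matrix (Fin n) (Fin n) ℝ)
    (hQoff : ∀ i j, i ≠ j → 0 ≤ Q i j)
    (hQrow : ∀ i, ∑ j, Q i j = 0)
    (π : Fin n → ℝ) (hπpos : ∀ i, 0 < π i)
    (hπinv : ∀ i, ∑ j, Q j i * π j = 0)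
    (ρ : ℝ → Fin n → ℝ)
    (hODE : ∀ t, ∀ i, HasDerivAt (fun s => ρ s i)
      (∑ j, (Q j i * ρ t j - Q i j * ρ t i)) t)
    (hmass : ∑ i, ρ 0 i = ∑ i, π i) :
    ∀ t, HasDerivAt (fun s => ∑ i, (ρ s i - π i)^2 / π i)
        (-(1/2) * ∑ i, ∑ j, (Q j i * π j + Q i j * π i) * (ρ t j / π j - ρ t i / π i)^2) t ∧
      -(1/2) * ∑ i, ∑ j, (Q j i * π j + Q i j * π i) * (ρ t j / π j - ρ t i / π i)^2 ≤ 0 :=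
  qmatrix_relative_chi2_dissipation_general Q hQoff hQrow π hπpos hπinv ρ hODE
end

section
/- Let Q be an irreducible n×n Q-matrix with invariant probability vector π and second eigenvalue modulus |μ₂| < 1 for K = Q/a + I (a > max_i(−Q_{ii})). Then for any probability vector ρ₀, the continuous-time solution ρ(t)ᵀ = ρ₀ᵀ e^{Qt} satisfies ‖ρ(t) − π‖_{ℓ¹} ≤ C e^{(a t/2)(|μ₂|−1)} ‖ρ₀‖_{ℓ¹}, i.e. exponential convergence to the invariant measure with explicit rate a(1−|μ₂|)/2. -/
/-!
Uniformize: `K = a⁻¹ • Q + 1` is an irreducible stochastic matrix fixing `π`. With the rank-one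
projection `P = 𝟙 πᵀ`, the deflated matrix `B = K - P` satisfies `B P = P B = 0`, whence
`exp (t Q) - P = e^{-ta} (1 - P) exp (t a B)`. A nonzero eigenvalue of `B` is an eigenvalue of `K`
with an eigenvector orthogonal to `π`; it cannot be `1`, because a vector fixed by an irreducible
stochastic matrix is constant (maximum principle). So the spectrum of `B` lies in the closed disc
of radius `|μ₂|`, Gelfand's formula gives `‖B ^ m‖ ≤ C r ^ m` for `r = (1 + |μ₂|) / 2`, hence
`‖exp (t a B)‖ ≤ C e^{tar}` in the `ℓ^∞` operator norm, which controls the `ℓ¹` distance from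
`ρ₀ᵀ exp (t Q)` to `π`.
-/

open Matrix NormedSpace Relation

theorem exists_norm_pow_le_of_forall_mem_spectrum_norm_le {A : Type*} [NormedRing A]
    [NormedAlgebra ℂ A] [CompleteSpace A] {a : A} {s r : ℝ}
    (hspec : ∀ μ ∈ spectrum ℂ a, ‖μ‖ ≤ s) (hs : 0 ≤ s) (hsr : s < r) :
    ∃ C > 0, ∀ m : ℕ, ‖a ^ m‖ ≤ C * r ^ m := by
  have hr : 0 < r := hs.trans_lt hsr
  have hrad : spectralRadius ℂ a < ENNReal.ofReal r := by
    refine lt_of_le_of_lt (iSup₂_le fun μ hμ => ?_) ((ENNReal.ofReal_lt_ofReal_iff hr).2 hsr)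
    rw [← enorm_eq_nnnorm, ← ofReal_norm]
    exact ENNReal.ofReal_le_ofReal (hspec μ hμ)
  have hev : ∀ᶠ m : ℕ in Filter.atTop, ‖a ^ m‖ ≤ r ^ m := by
    filter_upwards [(spectrum.pow_norm_pow_one_div_tendsto_nhds_spectralRadius a).eventually_lt_const
      hrad, Filter.eventually_ne_atTop 0] with m hm hm0
    have hroot : ‖a ^ m‖ ^ (1 / m : ℝ) < r := (ENNReal.ofReal_lt_ofReal_iff hr).1 hm
    calc ‖a ^ m‖ = (‖a ^ m‖ ^ (1 / m : ℝ)) ^ m := by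
          rw [← Real.rpow_natCast, ← Real.rpow_mul (norm_nonneg _),
            one_div_mul_cancel (by positivity), Real.rpow_one]
      _ ≤ r ^ m := pow_le_pow_left₀ (by positivity) hroot.le m
  obtain ⟨C, hC, hCbound⟩ := Asymptotics.bound_of_isBigO_nat_atTop
    (Asymptotics.IsBigO.of_bound (f := fun m : ℕ => a ^ m) (g := fun m : ℕ => r ^ m) 1
      (hev.mono fun m hm => by simpa [abs_of_pos hr] using hm))
  refine ⟨C, hC, fun m => ?_⟩
  simpa [abs_of_pos hr] using hCbound (pow_ne_zero m hr.ne')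

section BanachAlgebra

variable {A : Type*} [NormedRing A] [NormedAlgebra ℝ A]

theorem norm_exp_smul_le_of_norm_pow_le {b : A} {C r : ℝ} (hpow : ∀ m : ℕ, ‖b ^ m‖ ≤ C * r ^ m)
    {s : ℝ} (hs : 0 ≤ s) : ‖exp (s • b)‖ ≤ C * Real.exp (s * r) := by
  have hexp : HasSum (fun m : ℕ => C * ((s * r) ^ m / m.factorial)) (C * Real.exp (s * r)) := by
    rw [Real.exp_eq_exp_ℝ]
    exact (expSeries_div_hasSum_exp (s * r)).mul_left C
  have hsum := norm_expSeries_summable' (𝕂 := ℝ) (s • b)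
  rw [exp_eq_tsum ℝ]
  refine (norm_tsum_le_tsum_norm hsum).trans (hasSum_le (fun m => ?_) hsum.hasSum hexp)
  calc ‖(m.factorial⁻¹ : ℝ) • (s • b) ^ m‖ = (m.factorial⁻¹ : ℝ) * s ^ m * ‖b ^ m‖ := by
        rw [smul_pow, smul_smul, norm_smul, Real.norm_of_nonneg (by positivity)]
    _ ≤ (m.factorial⁻¹ : ℝ) * s ^ m * (C * r ^ m) := by gcongr; exact hpow m
    _ = C * ((s * r) ^ m / m.factorial) := by ring

variable [NormedAlgebra ℚ A] [CompleteSpace A]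

theorem exp_smul_sub_eq_smul_mul_exp {q p : A} (hqp : q * p = 0) (hpq : p * q = 0)
    (hp : IsIdempotentElem p) {a : ℝ} (ha : a ≠ 0) (t : ℝ) :
    exp (t • q) - p = Real.exp (-(t * a)) • ((1 - p) * exp ((t * a) • (a⁻¹ • q + 1 - p))) := by
  have hfix : exp (t • q) * p = p := by
    simpa using ((show SemiconjBy p 0 (t • q) by simp [SemiconjBy, hqp]).exp_right).eq.symm
  have hcompl : (1 - p) * exp (t • q - (t * a) • p) = exp (t • q) * (1 - p) := by
    refine (show SemiconjBy (1 - p) (t • q - (t * a) • p) (t • q) from ?_).exp_right.eq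
    simp only [SemiconjBy, sub_mul, mul_sub, one_mul, mul_one, smul_mul_assoc, mul_smul_comm,
      hpq, hqp, hp.eq, sub_zero, sub_self, smul_zero]
  have hsplit : t • q - (t * a) • p =
      (t * a) • (a⁻¹ • q + 1 - p) + algebraMap ℝ A (-(t * a)) := by
    rw [Algebra.algebraMap_eq_smul_one, smul_sub, smul_add, smul_smul, mul_assoc,
      mul_inv_cancel₀ ha, mul_one, neg_smul]
    abel
  rw [mul_sub, mul_one, hfix] at hcompl
  rw [← hcompl, hsplit, NormedSpace.exp_add_of_commute (Algebra.commutes _ _).symm, ← algebraMap_exp_comm,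
    ← Real.exp_eq_exp_ℝ, Algebra.algebraMap_eq_smul_one, mul_smul_one, mul_smul_comm]

theorem norm_exp_smul_sub_le {q p : A} (hqp : q * p = 0) (hpq : p * q = 0)
    (hp : IsIdempotentElem p) {a C r : ℝ} (ha : 0 < a)
    (hpow : ∀ m : ℕ, ‖(a⁻¹ • q + 1 - p) ^ m‖ ≤ C * r ^ m) {t : ℝ} (ht : 0 ≤ t) :
    ‖exp (t • q) - p‖ ≤ ‖1 - p‖ * C * Real.exp (t * a * (r - 1)) := by
  rw [exp_smul_sub_eq_smul_mul_exp hqp hpq hp ha.ne' t, norm_smul,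
    Real.norm_of_nonneg (Real.exp_pos _).le]
  calc Real.exp (-(t * a)) * ‖(1 - p) * exp ((t * a) • (a⁻¹ • q + 1 - p))‖
      ≤ Real.exp (-(t * a)) * (‖1 - p‖ * (C * Real.exp (t * a * r))) := by
        gcongr
        exact (norm_mul_le _ _).trans
          (by gcongr; exact norm_exp_smul_le_of_norm_pow_le hpow (by positivity))
    _ = ‖1 - p‖ * C * Real.exp (t * a * (r - 1)) := by
        rw [show t * a * (r - 1) = -(t * a) + t * a * r by ring, Real.exp_add]
        ring

end BanachAlgebra

namespace Matrix

variable {ι : Type*} [Fintype ι]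

theorem vecMul_replicateRow {α : Type*} [CommSemiring α] (v w : ι → α) :
    v ᵥ* replicateRow ι w = (∑ i, v i) • w := by
  ext j
  simp [vecMul, dotProduct, Finset.sum_mul]

theorem dotProduct_eq_zero_and_mulVec_eq_smul_of_sub_replicateRow {𝕜 : Type*} [Field 𝕜]
    {K : Matrix ι ι 𝕜} {π v : ι → 𝕜} {μ : 𝕜} (hπK : π ᵥ* K = π) (hπ : ∑ i, π i = 1)
    (hμ : μ ≠ 0) (hv : (K - replicateRow ι π) *ᵥ v = μ • v) :
    π ⬝ᵥ v = 0 ∧ K *ᵥ v = μ • v := by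
  have hπv : π ⬝ᵥ v = 0 := by
    have h : μ • (π ⬝ᵥ v) = 0 := by
      rw [← dotProduct_smul, ← hv, dotProduct_mulVec, vecMul_sub, hπK, vecMul_replicateRow, hπ,
        one_smul, sub_self, zero_dotProduct]
    exact (smul_eq_zero.1 h).resolve_left hμ
  refine ⟨hπv, ?_⟩
  have hPv : replicateRow ι π *ᵥ v = 0 := by
    ext i
    simpa [mulVec] using hπv
  rw [← hv, sub_mulVec, hPv, sub_zero]

section LinftyOpNorm

open scoped Matrix.Norms.Operator

theorem linfty_opNorm_map_ofReal {m n : Type*} [Fintype m] [Fintype n] (M : Matrix m n ℝ) :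
    ‖M.map (Complex.ofReal ·)‖ = ‖M‖ := by
  simp [linfty_opNorm_def]

theorem sum_norm_vecMul_le {α m n : Type*} [NormedRing α] [Fintype m] [Fintype n] (v : m → α)
    (M : Matrix m n α) : ∑ j, ‖(v ᵥ* M) j‖ ≤ (∑ i, ‖v i‖) * ‖M‖ := by
  simpa [← replicateRow_vecMul] using linfty_opNorm_mul (replicateRow Unit v) M

end LinftyOpNorm

variable [DecidableEq ι]

theorem mem_spectrum_iff_exists_mulVec_eq_smul {𝕜 : Type*} [Field 𝕜] {A : Matrix ι ι 𝕜}
    {μ : 𝕜} : μ ∈ spectrum 𝕜 A ↔ ∃ v ≠ 0, A *ᵥ v = μ • v := by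
  rw [← AlgEquiv.spectrum_eq toLinAlgEquiv' A, ← Module.End.hasEigenvalue_iff_mem_spectrum,
    Module.End.hasEigenvalue_iff, Submodule.ne_bot_iff]
  simp [toLinAlgEquiv'_apply, and_comm]

theorem eq_of_mulVec_eq_self_of_mem_rowStochastic {K : Matrix ι ι ℝ} (hK : K ∈ rowStochastic ℝ ι)
    (hirr : ∀ i j, ReflTransGen (fun i j => 0 < K i j) i j) {w : ι → ℝ} (hw : K *ᵥ w = w)
    (i j : ι) : w i = w j := by
  have : Nonempty ι := ⟨i⟩
  obtain ⟨k, hk⟩ := Finite.exists_max w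
  have hstep : ∀ b c, w b = w k → 0 < K b c → w c = w k := by
    intro b c hb hbc
    have hsum : ∑ l, K b l * (w k - w l) = 0 := by
      have hwb : ∑ l, K b l * w l = w b := congrFun hw b
      simp_rw [mul_sub, Finset.sum_sub_distrib, ← Finset.sum_mul, sum_row_of_mem_rowStochastic hK,
        one_mul, hwb, hb, sub_self]
    have hc := (Finset.sum_eq_zero_iff_of_nonneg fun l _ =>
      mul_nonneg (nonneg_of_mem_rowStochastic hK) (sub_nonneg.2 (hk l))).1 hsum c
      (Finset.mem_univ c)
    linarith [(mul_eq_zero.1 hc).resolve_left hbc.ne']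
  have hmax : ∀ j, w j = w k := fun j => by
    induction hirr k j with
    | refl => rfl
    | tail _ hbc ih => exact hstep _ _ ih hbc
  rw [hmax i, hmax j]

theorem eq_of_map_ofReal_mulVec_eq_self_of_mem_rowStochastic {K : Matrix ι ι ℝ}
    (hK : K ∈ rowStochastic ℝ ι) (hirr : ∀ i j, ReflTransGen (fun i j => 0 < K i j) i j)
    {w : ι → ℂ} (hw : K.map (Complex.ofReal ·) *ᵥ w = w) (i j : ι) : w i = w j := by
  have hre : K *ᵥ (fun i => (w i).re) = fun i => (w i).re := by
    funext i
    simpa [mulVec, dotProduct, Complex.re_sum] using congrArg Complex.re (congrFun hw i)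
  have him : K *ᵥ (fun i => (w i).im) = fun i => (w i).im := by
    funext i
    simpa [mulVec, dotProduct, Complex.im_sum] using congrArg Complex.im (congrFun hw i)
  exact Complex.ext (eq_of_mulVec_eq_self_of_mem_rowStochastic hK hirr hre i j)
    (eq_of_mulVec_eq_self_of_mem_rowStochastic hK hirr him i j)

theorem norm_le_of_mem_spectrum_map_sub_replicateRow {K : Matrix ι ι ℝ}
    (hK : K ∈ rowStochastic ℝ ι) (hirr : ∀ i j, ReflTransGen (fun i j => 0 < K i j) i j)
    {π : ι → ℝ} (hπK : π ᵥ* K = π) (hπ : ∑ i, π i = 1) {s : ℝ} (hs : 0 ≤ s)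
    (hspec : ∀ μ ∈ spectrum ℂ (K.map (Complex.ofReal ·)), μ ≠ 1 → ‖μ‖ ≤ s) {μ : ℂ}
    (hμ : μ ∈ spectrum ℂ ((K - replicateRow ι π).map (Complex.ofReal ·))) : ‖μ‖ ≤ s := by
  rcases eq_or_ne μ 0 with rfl | hμ0
  · simpa using hs
  obtain ⟨v, hv0, hv⟩ := mem_spectrum_iff_exists_mulVec_eq_smul.1 hμ
  have hπKc : (fun i => (π i : ℂ)) ᵥ* K.map (Complex.ofReal ·) = fun i => (π i : ℂ) := by
    ext j
    simpa [vecMul, dotProduct] using congrArg Complex.ofReal (congrFun hπK j)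
  have hmap : (K - replicateRow ι π).map (Complex.ofReal ·) =
      K.map (Complex.ofReal ·) - replicateRow ι (fun i => (π i : ℂ)) := by
    ext i j
    simp
  obtain ⟨hπv, hKv⟩ := dotProduct_eq_zero_and_mulVec_eq_smul_of_sub_replicateRow hπKc
    (by exact_mod_cast hπ) hμ0 (hmap ▸ hv)
  refine hspec μ (mem_spectrum_iff_exists_mulVec_eq_smul.2 ⟨v, hv0, hKv⟩) ?_
  rintro rfl
  -- `v` is then constant, and `π ⬝ᵥ v = 0` forces the constant to vanish
  refine hv0 (funext fun i => ?_)
  have hconst := eq_of_map_ofReal_mulVec_eq_self_of_mem_rowStochastic hK hirr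
    (by simpa using hKv) i
  rw [Pi.zero_apply, ← hπv]
  simp [dotProduct, ← hconst, ← Finset.sum_mul, ← Complex.ofReal_sum, hπ]

theorem inv_smul_add_one_mem_rowStochastic {Q : Matrix ι ι ℝ}
    (hQoff : ∀ i j, i ≠ j → 0 ≤ Q i j) (hQrow : ∀ i, ∑ j, Q i j = 0) {a : ℝ} (ha : 0 < a)
    (hdiag : ∀ i, -Q i i ≤ a) : a⁻¹ • Q + 1 ∈ rowStochastic ℝ ι := by
  rw [mem_rowStochastic_iff_sum]
  refine ⟨fun i j => ?_, fun i => ?_⟩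
  · rcases eq_or_ne i j with rfl | hij
    · have : -1 ≤ a⁻¹ * Q i i := by
        rw [le_inv_mul_iff₀ ha]
        linarith [hdiag i]
      simp
      linarith
    · simpa [hij] using mul_nonneg (inv_nonneg.2 ha.le) (hQoff i j hij)
  · simp [Finset.sum_add_distrib, ← Finset.mul_sum, hQrow, one_apply]

section LinftyOpNorm

open scoped Matrix.Norms.Operator

theorem exists_norm_pow_sub_replicateRow_le {K : Matrix ι ι ℝ} (hK : K ∈ rowStochastic ℝ ι)
    (hirr : ∀ i j, ReflTransGen (fun i j => 0 < K i j) i j) {π : ι → ℝ} (hπK : π ᵥ* K = π)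
    (hπ : ∑ i, π i = 1) {s r : ℝ} (hs : 0 ≤ s) (hsr : s < r)
    (hspec : ∀ μ ∈ spectrum ℂ (K.map (Complex.ofReal ·)), μ ≠ 1 → ‖μ‖ ≤ s) :
    ∃ C > 0, ∀ m : ℕ, ‖(K - replicateRow ι π) ^ m‖ ≤ C * r ^ m := by
  obtain ⟨C, hC, hpow⟩ := exists_norm_pow_le_of_forall_mem_spectrum_norm_le
    (fun μ hμ => norm_le_of_mem_spectrum_map_sub_replicateRow hK hirr hπK hπ hs hspec hμ) hs hsr
  refine ⟨C, hC, fun m => ?_⟩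
  rw [← linfty_opNorm_map_ofReal,
    show ((K - replicateRow ι π) ^ m).map (Complex.ofReal ·) =
      ((K - replicateRow ι π).map (Complex.ofReal ·)) ^ m from
      map_pow Complex.ofRealHom.mapMatrix _ m]
  exact hpow m

theorem exists_norm_exp_smul_sub_replicateRow_le {Q : Matrix ι ι ℝ}
    (hQoff : ∀ i j, i ≠ j → 0 ≤ Q i j) (hQrow : ∀ i, ∑ j, Q i j = 0)
    (hirr : ∀ i j, ReflTransGen (fun i j => i ≠ j ∧ 0 < Q i j) i j) {π : ι → ℝ}
    (hπ : ∑ i, π i = 1) (hπQ : π ᵥ* Q = 0) {a : ℝ} (ha : 0 < a) (hdiag : ∀ i, -Q i i ≤ a)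
    {s : ℝ} (hs0 : 0 ≤ s) (hs1 : s < 1)
    (hspec : ∀ μ ∈ spectrum ℂ ((a⁻¹ • Q + 1).map (Complex.ofReal ·)), μ ≠ 1 → ‖μ‖ ≤ s) :
    ∃ C > 0, ∀ t ≥ (0 : ℝ),
      ‖exp (t • Q) - replicateRow ι π‖ ≤ C * Real.exp (a * t / 2 * (s - 1)) := by
  set K := a⁻¹ • Q + 1
  set P := replicateRow ι π
  have hK : K ∈ rowStochastic ℝ ι := inv_smul_add_one_mem_rowStochastic hQoff hQrow ha hdiag
  have hKirr : ∀ i j, ReflTransGen (fun i j => 0 < K i j) i j := fun i j =>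
    ReflTransGen.mono (fun b c hbc => by simpa [K, hbc.1] using mul_pos (inv_pos.2 ha) hbc.2)
      i j (hirr i j)
  have hπK : π ᵥ* K = π := by
    rw [vecMul_add, vecMul_smul, hπQ, smul_zero, vecMul_one, zero_add]
  obtain ⟨C, hC, hpow⟩ := exists_norm_pow_sub_replicateRow_le hK hKirr hπK hπ hs0
    (show s < (1 + s) / 2 by linarith) hspec
  have hQP : Q * P = 0 := by
    ext i j
    simp [P, mul_apply, ← Finset.sum_mul, hQrow]
  have hPQ : P * Q = 0 := by
    rw [← replicateRow_vecMul, hπQ]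
    rfl
  have hP : IsIdempotentElem P := by
    rw [IsIdempotentElem, ← replicateRow_vecMul, vecMul_replicateRow, hπ, one_smul]
  refine ⟨‖1 - P‖ * C + 1, by positivity, fun t ht => ?_⟩
  calc ‖exp (t • Q) - P‖ ≤ ‖1 - P‖ * C * Real.exp (t * a * ((1 + s) / 2 - 1)) :=
        norm_exp_smul_sub_le hQP hPQ hP ha hpow ht
    _ ≤ (‖1 - P‖ * C + 1) * Real.exp (a * t / 2 * (s - 1)) := by
        rw [show t * a * ((1 + s) / 2 - 1) = a * t / 2 * (s - 1) by ring]
        gcongr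
        linarith

end LinftyOpNorm

end Matrix

theorem qmatrix_continuous_exponential_ergodicity_general {n : ℕ} (Q : Matrix (Fin n) (Fin n) ℝ)
    (hQoff : ∀ i j, i ≠ j → 0 ≤ Q i j)
    (hQrow : ∀ i, ∑ j, Q i j = 0)
    (hirr : ∀ i j : Fin n, Relation.ReflTransGen (fun a b => a ≠ b ∧ 0 < Q a b) i j)
    (π : Fin n → ℝ) (hπsum : ∑ i, π i = 1)
    (hπinv : ∀ j, ∑ i, π i * Q i j = 0)
    (a : ℝ) (ha : 0 < a) (hamax : ∀ i, -Q i i < a)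
    (μ₂ : ℝ) (hμ₂nonneg : 0 ≤ μ₂) (hμ₂ : μ₂ < 1)
    (hspec : ∀ μ ∈ spectrum ℂ ((a⁻¹ • Q + 1).map (Complex.ofReal ·)), μ ≠ 1 → ‖μ‖ ≤ μ₂)
    (ρ₀ : Fin n → ℝ) (hρ₀sum : ∑ i, ρ₀ i = 1) :
    ∃ C : ℝ, 0 < C ∧ ∀ t ≥ (0:ℝ),
      ∑ j, |(∑ i, ρ₀ i * NormedSpace.exp (t • Q) i j) - π j| ≤
        C * Real.exp (a * t / 2 * (μ₂ - 1)) * ∑ i, |ρ₀ i| := by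
  obtain ⟨C, hC, hbound⟩ := exists_norm_exp_smul_sub_replicateRow_le hQoff hQrow hirr hπsum
    (funext hπinv) ha (fun i => (hamax i).le) hμ₂nonneg hμ₂ hspec
  refine ⟨C, hC, fun t ht => ?_⟩
  have hρ : ∀ j, (∑ i, ρ₀ i * exp (t • Q) i j) - π j =
      (ρ₀ ᵥ* (exp (t • Q) - replicateRow (Fin n) π)) j := by
    intro j
    rw [vecMul_sub, vecMul_replicateRow, hρ₀sum, one_smul]
    rfl
  simp_rw [hρ, ← Real.norm_eq_abs]
  refine (sum_norm_vecMul_le _ _).trans ?_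
  rw [mul_comm]
  exact mul_le_mul_of_nonneg_right (hbound t ht) (Finset.sum_nonneg fun i _ => norm_nonneg _)

/-- Exponential ergodicity of the continuous-time semigroup `ρ(t)ᵀ = ρ₀ᵀ e^{Qt}` for an
irreducible Q-matrix: `‖ρ(t) − π‖_{ℓ¹} ≤ C e^{(at/2)(|μ₂|−1)} ‖ρ₀‖_{ℓ¹}`, where `|μ₂| < 1`
dominates the moduli of the non-unit eigenvalues of `K = Q/a + I`, `a > max_i(−Q_{ii})`. -/
theorem qmatrix_continuous_exponential_ergodicity {n : ℕ} (Q : Matrix (Fin n) (Fin n) ℝ)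
    (hQoff : ∀ i j, i ≠ j → 0 ≤ Q i j)
    (hQrow : ∀ i, ∑ j, Q i j = 0)
    (hirr : ∀ i j : Fin n, Relation.ReflTransGen (fun a b => a ≠ b ∧ 0 < Q a b) i j)
    (π : Fin n → ℝ) (hπpos : ∀ i, 0 < π i) (hπsum : ∑ i, π i = 1)
    (hπinv : ∀ j, ∑ i, π i * Q i j = 0)
    (a : ℝ) (ha : 0 < a) (hamax : ∀ i, -Q i i < a)
    (μ₂ : ℝ) (hμ₂nonneg : 0 ≤ μ₂) (hμ₂ : μ₂ < 1)
    (hspec : ∀ μ ∈ spectrum ℂ ((a⁻¹ • Q + 1).map (Complex.ofReal ·)), μ ≠ 1 → ‖μ‖ ≤ μ₂)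
    (ρ₀ : Fin n → ℝ) (hρ₀nonneg : ∀ i, 0 ≤ ρ₀ i) (hρ₀sum : ∑ i, ρ₀ i = 1) :
    ∃ C : ℝ, 0 < C ∧ ∀ t ≥ (0:ℝ),
      ∑ j, |(∑ i, ρ₀ i * NormedSpace.exp (t • Q) i j) - π j| ≤
        C * Real.exp (a * t / 2 * (μ₂ - 1)) * ∑ i, |ρ₀ i| :=
  qmatrix_continuous_exponential_ergodicity_general Q hQoff hQrow hirr π hπsum hπinv a ha hamax μ₂
    hμ₂nonneg hμ₂ hspec ρ₀ hρ₀sum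
end
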